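/- arXiv:2308.09604 — 3 statements merged into one kernel-verified Lean document; each statement's English description precedes it below -/
import Mathlib

section
/- Let f : A × B → ℝ be differentiable, μ-strongly concave in its second argument with gradient L-Lipschitz jointly in both arguments, and suppose g : X → ℝ^d satisfies that x ↦ f(g(x), ·) admits a unique maximizer y*(x) = argmax_{y ∈ B} f(g(x), y) characterized by ∇_y f(g(x), y*(x)) = 0. If additionally ‖g(x₁) − g(x₂)‖ ≤ C_g‖x₁ − x₂‖ for all x₁, x₂, then ‖y*(x₁) − y*(x₂)‖ ≤ C_g·(L/μ)·‖x₁ − x₂‖. -/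
open RealInnerProductSpace

/-- Lipschitzness of the maximizer map `y*` in minimax optimization:
`‖y*(x₁) − y*(x₂)‖ ≤ C_g (L/μ) ‖x₁ − x₂‖`. -/
theorem maximizer_lipschitz
    {X G F : Type*}
    [NormedAddCommGroup X] [InnerProductSpace ℝ X]
    [NormedAddCommGroup G] [InnerProductSpace ℝ G]
    [NormedAddCommGroup F] [InnerProductSpace ℝ F]
    (f : G × F → ℝ) (gradY : G × F → F) (g : X → G) (ystar : X → F)
    (μ L Cg : ℝ) (hμ : 0 < μ) (hL : 0 < L)
    -- μ-strong concavity in the second argument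
    (hconc : ∀ (a : G) (b₁ b₂ : F),
      f (a, b₁) ≤ f (a, b₂) + ⟪gradY (a, b₂), b₁ - b₂⟫ - μ / 2 * ‖b₁ - b₂‖ ^ 2)
    -- gradient L-Lipschitz jointly in both arguments (Euclidean product norm)
    (hlip : ∀ (a₁ a₂ : G) (b₁ b₂ : F),
      ‖gradY (a₁, b₁) - gradY (a₂, b₂)‖ ≤
        L * Real.sqrt (‖a₁ - a₂‖ ^ 2 + ‖b₁ - b₂‖ ^ 2))
    -- y*(x) is the (unique) maximizer, characterized by a vanishing gradient
    (hmax : ∀ x : X, ∀ y : F, f (g x, y) ≤ f (g x, ystar x))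
    (hcrit : ∀ x : X, gradY (g x, ystar x) = 0)
    -- Lipschitzness of g
    (hg : ∀ x₁ x₂ : X, ‖g x₁ - g x₂‖ ≤ Cg * ‖x₁ - x₂‖) :
    ∀ x₁ x₂ : X, ‖ystar x₁ - ystar x₂‖ ≤ Cg * (L / μ) * ‖x₁ - x₂‖ := by
  intro x₁ x₂
  set a₁ := g x₁ with ha₁
  set a₂ := g x₂ with ha₂
  set y₁ := ystar x₁ with hy₁
  set y₂ := ystar x₂ with hy₂
  have h1 := hconc a₁ y₁ y₂
  have h2 := hconc a₁ y₂ y₁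
  have hc1 : gradY (a₁, y₁) = 0 := hcrit x₁
  have hc2 : gradY (a₂, y₂) = 0 := hcrit x₂
  rw [hc1, inner_zero_left] at h2
  have hnrev : ‖y₂ - y₁‖ = ‖y₁ - y₂‖ := norm_sub_rev _ _
  rw [hnrev] at h2
  -- key strong-monotonicity inequality
  have hkey : μ * ‖y₁ - y₂‖ ^ 2 ≤ ⟪gradY (a₁, y₂), y₁ - y₂⟫ := by linarith
  -- bound the inner product
  have hib : ⟪gradY (a₁, y₂), y₁ - y₂⟫ ≤ L * ‖a₁ - a₂‖ * ‖y₁ - y₂‖ := by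
    have e : gradY (a₁, y₂) = gradY (a₁, y₂) - gradY (a₂, y₂) := by rw [hc2]; abel
    calc ⟪gradY (a₁, y₂), y₁ - y₂⟫
        ≤ ‖gradY (a₁, y₂)‖ * ‖y₁ - y₂‖ := real_inner_le_norm _ _
      _ = ‖gradY (a₁, y₂) - gradY (a₂, y₂)‖ * ‖y₁ - y₂‖ := by rw [← e]
      _ ≤ (L * Real.sqrt (‖a₁ - a₂‖ ^ 2 + ‖y₂ - y₂‖ ^ 2)) * ‖y₁ - y₂‖ := by
          gcongr; exact hlip a₁ a₂ y₂ y₂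
      _ = L * ‖a₁ - a₂‖ * ‖y₁ - y₂‖ := by
          rw [sub_self, norm_zero]
          norm_num [Real.sqrt_sq (norm_nonneg (a₁ - a₂))]
  have hga : ‖a₁ - a₂‖ ≤ Cg * ‖x₁ - x₂‖ := hg x₁ x₂
  have hga0 : 0 ≤ Cg * ‖x₁ - x₂‖ := le_trans (norm_nonneg _) hga
  rcases eq_or_lt_of_le (norm_nonneg (y₁ - y₂)) with h0 | h0
  · rw [← h0]
    nlinarith [hga0, div_pos hL hμ]
  · have : μ * ‖y₁ - y₂‖ ^ 2 ≤ L * (Cg * ‖x₁ - x₂‖) * ‖y₁ - y₂‖ := by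
      calc μ * ‖y₁ - y₂‖ ^ 2 ≤ ⟪gradY (a₁, y₂), y₁ - y₂⟫ := hkey
        _ ≤ L * ‖a₁ - a₂‖ * ‖y₁ - y₂‖ := hib
        _ ≤ L * (Cg * ‖x₁ - x₂‖) * ‖y₁ - y₂‖ := by gcongr
    have hdiv : μ * ‖y₁ - y₂‖ ≤ L * (Cg * ‖x₁ - x₂‖) := by
      nlinarith
    rw [mul_comm Cg (L / μ), div_mul_eq_mul_div, div_mul_eq_mul_div, le_div_iff₀ hμ]
    nlinarith
end

section
/- Under the assumptions: f is L-smooth and μ-strongly concave in y with ‖∇f‖ ≤ C_f, g is L_g-smooth with ‖∇g(x)‖ ≤ C_g and ‖g(x₁) − g(x₂)‖ ≤ C_g‖x₁−x₂‖, and y*(x) is (C_g L/μ)-Lipschitz, the function Φ(x) = max_y f(g(x), y) has gradient ∇Φ(x) = ∇g(x)ᵀ ∇_g f(g(x), y*(x)) satisfying ‖∇Φ(x₁) − ∇Φ(x₂)‖ ≤ (C_f L_g + 2C_g²L²/μ)‖x₁ − x₂‖ for all x₁, x₂, provided L ≥ μ. -/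
open RealInnerProductSpace

/-- Smoothness of `Φ(x) = max_y f(g(x), y)`:
`‖∇Φ(x₁) − ∇Φ(x₂)‖ ≤ (C_f L_g + 2 C_g² L² / μ) ‖x₁ − x₂‖`. -/
theorem Phi_smooth
    {X G F : Type*}
    [NormedAddCommGroup X] [InnerProductSpace ℝ X]
    [NormedAddCommGroup G] [InnerProductSpace ℝ G]
    [NormedAddCommGroup F] [InnerProductSpace ℝ F]
    (f : G × F → ℝ) (g : X → G) (ystar : X → F) (Φ : X → ℝ)
    (gradPhi : X → X)
    (Jt : X → (G →L[ℝ] X))      -- transposed Jacobian ∇g(x)ᵀ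
    (gradF : G × F → G)          -- gradient of f in its first argument
    (μ L Lg Cf Cg : ℝ) (hμ : 0 < μ) (hLμ : μ ≤ L)
    -- Φ is the max and its gradient is ∇g(x)ᵀ ∇_g f(g(x), y*(x))
    (hPhi : ∀ x : X, Φ x = f (g x, ystar x))
    (hmax : ∀ x : X, ∀ y : F, f (g x, y) ≤ f (g x, ystar x))
    (hgrad : ∀ x : X, gradPhi x = Jt x (gradF (g x, ystar x)))
    -- L-smoothness of f (gradient L-Lipschitz jointly, Euclidean product norm)
    (hflip : ∀ (a₁ a₂ : G) (b₁ b₂ : F),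
      ‖gradF (a₁, b₁) - gradF (a₂, b₂)‖ ≤
        L * Real.sqrt (‖a₁ - a₂‖ ^ 2 + ‖b₁ - b₂‖ ^ 2))
    -- bounded gradients
    (hfb : ∀ p : G × F, ‖gradF p‖ ≤ Cf)
    (hJb : ∀ x : X, ‖Jt x‖ ≤ Cg)
    -- L_g-smoothness of ∇g
    (hJlip : ∀ x₁ x₂ : X, ‖Jt x₁ - Jt x₂‖ ≤ Lg * ‖x₁ - x₂‖)
    -- g Lipschitz and y* Lipschitz with constant C_g L / μ
    (hg : ∀ x₁ x₂ : X, ‖g x₁ - g x₂‖ ≤ Cg * ‖x₁ - x₂‖)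
    (hy : ∀ x₁ x₂ : X, ‖ystar x₁ - ystar x₂‖ ≤ Cg * L / μ * ‖x₁ - x₂‖) :
    ∀ x₁ x₂ : X, ‖gradPhi x₁ - gradPhi x₂‖ ≤
      (Cf * Lg + 2 * Cg ^ 2 * L ^ 2 / μ) * ‖x₁ - x₂‖ := by
  intro x₁ x₂
  have hCg : 0 ≤ Cg := le_trans (norm_nonneg _) (hJb x₁)
  have hCf : 0 ≤ Cf := le_trans (norm_nonneg _) (hfb (g x₁, ystar x₁))
  have hL : 0 < L := lt_of_lt_of_le hμ hLμ
  have hd : 0 ≤ ‖x₁ - x₂‖ := norm_nonneg _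
  rw [hgrad, hgrad]
  set v₁ := gradF (g x₁, ystar x₁) with hv₁
  set v₂ := gradF (g x₂, ystar x₂) with hv₂
  have key : Jt x₁ v₁ - Jt x₂ v₂ = (Jt x₁ - Jt x₂) v₁ + (Jt x₂) (v₁ - v₂) := by
    simp [ContinuousLinearMap.sub_apply, map_sub]
  rw [key]
  have h1 : ‖(Jt x₁ - Jt x₂) v₁‖ ≤ (Lg * ‖x₁ - x₂‖) * Cf := by
    calc ‖(Jt x₁ - Jt x₂) v₁‖ ≤ ‖Jt x₁ - Jt x₂‖ * ‖v₁‖ :=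
          (Jt x₁ - Jt x₂).le_opNorm v₁
      _ ≤ (Lg * ‖x₁ - x₂‖) * Cf :=
          mul_le_mul (hJlip x₁ x₂) (hfb _) (norm_nonneg _)
            (le_trans (norm_nonneg _) (hJlip x₁ x₂))
  have hk : Cg ≤ Cg * L / μ := by
    rw [le_div_iff₀ hμ]; nlinarith
  have ha := hg x₁ x₂
  have hb := hy x₁ x₂
  have hkd : 0 ≤ Cg * L / μ * ‖x₁ - x₂‖ :=
    mul_nonneg (le_trans hCg hk) hd
  have hsq : Real.sqrt (‖g x₁ - g x₂‖ ^ 2 + ‖ystar x₁ - ystar x₂‖ ^ 2)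
      ≤ 2 * (Cg * L / μ) * ‖x₁ - x₂‖ := by
    have hle : ‖g x₁ - g x₂‖ ^ 2 + ‖ystar x₁ - ystar x₂‖ ^ 2
        ≤ (2 * (Cg * L / μ) * ‖x₁ - x₂‖) ^ 2 := by
      nlinarith [norm_nonneg (g x₁ - g x₂), norm_nonneg (ystar x₁ - ystar x₂),
        mul_le_mul_of_nonneg_right hk hd, sq_nonneg (Cg * L / μ * ‖x₁ - x₂‖)]
    calc Real.sqrt (‖g x₁ - g x₂‖ ^ 2 + ‖ystar x₁ - ystar x₂‖ ^ 2)
        ≤ Real.sqrt ((2 * (Cg * L / μ) * ‖x₁ - x₂‖) ^ 2) := Real.sqrt_le_sqrt hle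
      _ = 2 * (Cg * L / μ) * ‖x₁ - x₂‖ := Real.sqrt_sq (by linarith)
  have hv : ‖v₁ - v₂‖ ≤ L * (2 * (Cg * L / μ) * ‖x₁ - x₂‖) := by
    calc ‖v₁ - v₂‖ ≤ L * Real.sqrt (‖g x₁ - g x₂‖ ^ 2 + ‖ystar x₁ - ystar x₂‖ ^ 2) :=
          hflip _ _ _ _
      _ ≤ L * (2 * (Cg * L / μ) * ‖x₁ - x₂‖) :=
          mul_le_mul_of_nonneg_left hsq hL.le
  have h2 : ‖(Jt x₂) (v₁ - v₂)‖ ≤ Cg * (L * (2 * (Cg * L / μ) * ‖x₁ - x₂‖)) := by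
    calc ‖(Jt x₂) (v₁ - v₂)‖ ≤ ‖Jt x₂‖ * ‖v₁ - v₂‖ := (Jt x₂).le_opNorm _
      _ ≤ Cg * (L * (2 * (Cg * L / μ) * ‖x₁ - x₂‖)) :=
          mul_le_mul (hJb x₂) hv (norm_nonneg _) hCg
  calc ‖(Jt x₁ - Jt x₂) v₁ + (Jt x₂) (v₁ - v₂)‖
      ≤ ‖(Jt x₁ - Jt x₂) v₁‖ + ‖(Jt x₂) (v₁ - v₂)‖ := norm_add_le _ _
    _ ≤ (Lg * ‖x₁ - x₂‖) * Cf + Cg * (L * (2 * (Cg * L / μ) * ‖x₁ - x₂‖)) :=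
          add_le_add h1 h2
    _ = (Cf * Lg + 2 * Cg ^ 2 * L ^ 2 / μ) * ‖x₁ - x₂‖ := by ring
end

section
/- Let h : ℝ^d → ℝ be L-smooth and satisfy the PL condition with constant μ: ‖∇h(x)‖² ≥ 2μ(h(x) − h*) where h* = inf h. Then h satisfies the quadratic growth condition: h(x) − h* ≥ (μ/2)·dist(x, X*)² for all x, where X* is the set of minimizers and dist the Euclidean distance. -/
/-!
Run gradient descent `x ↦ x - η ∇h(x)` from `x`. By the descent lemma each step lowers `h` by
`η (1 - Lη) ‖∇h‖²`, and by PL `‖∇h‖ ≥ √(2μ (h - h*))`; together they make `√(h - h*)` drop by at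
least `(1 - Lη) √(μ/2)` times the length of the step. The path therefore has length at most
`√(h x - h*) / ((1 - Lη) √(μ/2))`, so the iterates converge, and their limit is a minimizer since
the gradients tend to zero. This bounds `dist(x, X*)`; letting `η → 0` gives the constant `μ/2`.
-/

open RealInnerProductSpace Filter Topology

theorem Real.sub_le_two_mul_sqrt_mul_sub_sqrt {a b : ℝ} (hb : 0 ≤ b) (hba : b ≤ a) :
    a - b ≤ 2 * √a * (√a - √b) := by
  have hsqrt : √b ≤ √a := Real.sqrt_le_sqrt hba
  nlinarith [Real.sq_sqrt hb, Real.sq_sqrt (hb.trans hba), Real.sqrt_nonneg b]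

theorem Metric.exists_tendsto_of_mul_dist_add_le {X : Type*} [MetricSpace X] [CompleteSpace X]
    {u : ℕ → X} {φ : X → ℝ} {c : ℝ} (hc : 0 < c) (hφ : ∀ n, 0 ≤ φ (u n))
    (hstep : ∀ n, c * dist (u n) (u (n + 1)) + φ (u (n + 1)) ≤ φ (u n)) :
    ∃ y, Tendsto u atTop (𝓝 y) ∧ c * dist (u 0) y ≤ φ (u 0) ∧
      Tendsto (fun n ↦ dist (u n) (u (n + 1))) atTop (𝓝 0) := by
  have hpartial : ∀ n, c * ∑ i ∈ Finset.range n, dist (u i) (u (i + 1)) + φ (u n) ≤ φ (u 0) := by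
    intro n
    induction n with
    | zero => simp
    | succ n ih => rw [Finset.sum_range_succ]; linarith [hstep n]
  have hbound : ∀ n, ∑ i ∈ Finset.range n, dist (u i) (u (i + 1)) ≤ φ (u 0) / c := fun n ↦
    (le_div_iff₀' hc).2 (by linarith [hpartial n, hφ n])
  have hsum : Summable fun n ↦ dist (u n) (u (n + 1)) :=
    summable_of_sum_range_le (fun _ ↦ dist_nonneg) hbound
  obtain ⟨y, hy⟩ := cauchySeq_tendsto_of_complete (cauchySeq_of_summable_dist hsum)
  refine ⟨y, hy, ?_, hsum.tendsto_atTop_zero⟩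
  calc c * dist (u 0) y ≤ c * (φ (u 0) / c) := by
        gcongr
        exact (dist_le_tsum_dist_of_tendsto₀ hsum hy).trans
          (Real.tsum_le_of_sum_range_le (fun _ ↦ dist_nonneg) hbound)
    _ = φ (u 0) := mul_div_cancel₀ _ hc.ne'

section GradientDescent

variable {E : Type*} [NormedAddCommGroup E] [InnerProductSpace ℝ E] [CompleteSpace E]
  {h : E → ℝ} {g : E → E} {L μ hstar η : ℝ}

theorem abs_sub_sub_inner_le_of_lipschitz_gradient (hdiff : ∀ x, HasGradientAt h (g x) x)
    (hlip : ∀ x₁ x₂, ‖g x₁ - g x₂‖ ≤ L * ‖x₁ - x₂‖) (x y : E) :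
    |h y - h x - ⟪g x, y - x⟫| ≤ L * ‖y - x‖ ^ 2 := by
  have hbound : ∀ z ∈ segment ℝ x y,
      ‖InnerProductSpace.toDual ℝ E (g z) - InnerProductSpace.toDual ℝ E (g x)‖ ≤ L * ‖y - x‖ := by
    intro z hz
    rw [← map_sub, LinearIsometryEquiv.norm_map]
    have hzx := norm_sub_le_of_mem_segment hz
    refine (hlip z x).trans ?_
    rcases le_or_gt 0 L with hL | hL
    · exact mul_le_mul_of_nonneg_left hzx hL
    · have hyx : ‖y - x‖ = 0 := by
        nlinarith [hlip y x, norm_nonneg (g y - g x), norm_nonneg (y - x)]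
      have hzx0 : ‖z - x‖ = 0 := le_antisymm (hyx ▸ hzx) (norm_nonneg _)
      rw [hyx, hzx0]
  have := (convex_segment x y).norm_image_sub_le_of_norm_hasFDerivWithin_le'
    (fun z _ ↦ (hdiff z).hasFDerivAt.hasFDerivWithinAt) hbound
    (left_mem_segment ℝ x y) (right_mem_segment ℝ x y)
  rw [InnerProductSpace.toDual_apply_apply] at this
  rw [← Real.norm_eq_abs]
  linarith

theorem apply_gradient_step_le (hdiff : ∀ x, HasGradientAt h (g x) x)
    (hlip : ∀ x₁ x₂, ‖g x₁ - g x₂‖ ≤ L * ‖x₁ - x₂‖) (x : E) :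
    h (x - η • g x) ≤ h x - η * (1 - L * η) * ‖g x‖ ^ 2 := by
  have := (abs_le.1 (abs_sub_sub_inner_le_of_lipschitz_gradient hdiff hlip x (x - η • g x))).2
  rw [sub_sub_cancel_left, inner_neg_right, real_inner_smul_right, real_inner_self_eq_norm_sq,
    norm_neg, norm_smul, Real.norm_eq_abs, mul_pow, sq_abs] at this
  linarith

theorem mul_dist_add_sqrt_gradient_step_le (hμ : 0 < μ) (hη : 0 < η) (hLη : L * η ≤ 1)
    (hdiff : ∀ x, HasGradientAt h (g x) x)
    (hlip : ∀ x₁ x₂, ‖g x₁ - g x₂‖ ≤ L * ‖x₁ - x₂‖)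
    (hinf : ∀ x, hstar ≤ h x)
    (hPL : ∀ x, ‖g x‖ ^ 2 ≥ 2 * μ * (h x - hstar)) (x : E) :
    (1 - L * η) * √(μ / 2) * dist x (x - η • g x) + √(h (x - η • g x) - hstar) ≤
      √(h x - hstar) := by
  set G := ‖g x‖
  set a := h x - hstar
  set b := h (x - η • g x) - hstar
  have hdist : dist x (x - η • g x) = η * G := by
    rw [dist_eq_norm, sub_sub_cancel, norm_smul, Real.norm_eq_abs, abs_of_pos hη]
  have hdecrease : η * (1 - L * η) * G ^ 2 ≤ a - b := by
    linarith [apply_gradient_step_le (η := η) hdiff hlip x]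
  have hb : 0 ≤ b := sub_nonneg.2 (hinf _)
  have hk : 0 ≤ 1 - L * η := sub_nonneg.2 hLη
  have hba : b ≤ a := by nlinarith [mul_nonneg (mul_nonneg hη.le hk) (sq_nonneg G)]
  have hgrad : 2 * √(μ / 2) * √a ≤ G := by
    refine (pow_le_pow_iff_left₀ (by positivity) (norm_nonneg _) two_ne_zero).1 ?_
    rw [mul_pow, mul_pow, Real.sq_sqrt (by positivity), Real.sq_sqrt (sub_nonneg.2 (hinf x))]
    linarith [hPL x]
  have hsqrt : √b ≤ √a := Real.sqrt_le_sqrt hba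
  -- `√a - √b ≥ (a - b) / (2√a) ≥ η (1 - Lη) G² √(μ/2) / G`
  have hG : G * ((1 - L * η) * √(μ / 2) * (η * G)) ≤ G * (√a - √b) := by
    have := Real.sub_le_two_mul_sqrt_mul_sub_sqrt hb hba
    have ht : 0 ≤ √(μ / 2) := Real.sqrt_nonneg _
    nlinarith [mul_le_mul_of_nonneg_right hgrad (sub_nonneg.2 hsqrt),
      mul_le_mul_of_nonneg_left (hdecrease.trans this) ht]
  rw [hdist]
  rcases (norm_nonneg (g x) : 0 ≤ G).eq_or_lt with hG0 | hGpos
  · rw [show G = 0 from hG0.symm, mul_zero, mul_zero]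
    linarith
  · linarith [le_of_mul_le_mul_left hG hGpos]

theorem apply_eq_of_tendsto_of_tendsto_gradient_zero (hμ : 0 < μ)
    (hdiff : ∀ x, HasGradientAt h (g x) x) (hinf : ∀ x, hstar ≤ h x)
    (hPL : ∀ x, ‖g x‖ ^ 2 ≥ 2 * μ * (h x - hstar)) {u : ℕ → E} {y : E}
    (hu : Tendsto u atTop (𝓝 y)) (hgu : Tendsto (fun n ↦ g (u n)) atTop (𝓝 0)) :
    h y = hstar := by
  have hcont : Continuous h := continuous_iff_continuousAt.2 fun p ↦ (hdiff p).continuousAt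
  have hupper : Tendsto (fun n ↦ hstar + ‖g (u n)‖ ^ 2 / (2 * μ)) atTop (𝓝 hstar) := by
    simpa using tendsto_const_nhds.add ((hgu.norm.pow 2).div_const (2 * μ))
  refine tendsto_nhds_unique ((hcont.tendsto y).comp hu)
    (tendsto_of_tendsto_of_tendsto_of_le_of_le tendsto_const_nhds hupper (fun n ↦ hinf _) ?_)
  intro n
  have := hPL (u n)
  simp only [Function.comp_apply]
  rw [← sub_le_iff_le_add', le_div_iff₀' (by positivity)]
  linarith

theorem sq_one_sub_mul_mul_infDist_sq_le (hμ : 0 < μ) (hη : 0 < η) (hLη : L * η < 1)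
    (hdiff : ∀ x, HasGradientAt h (g x) x)
    (hlip : ∀ x₁ x₂, ‖g x₁ - g x₂‖ ≤ L * ‖x₁ - x₂‖)
    (hinf : ∀ x, hstar ≤ h x)
    (hPL : ∀ x, ‖g x‖ ^ 2 ≥ 2 * μ * (h x - hstar)) (x : E) :
    (1 - L * η) ^ 2 * (μ / 2) * Metric.infDist x {y | h y = hstar} ^ 2 ≤ h x - hstar := by
  set c := (1 - L * η) * √(μ / 2)
  have hc : 0 < c := mul_pos (sub_pos.2 hLη) (Real.sqrt_pos.2 (half_pos hμ))
  set u : ℕ → E := fun n ↦ (fun p ↦ p - η • g p)^[n] x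
  have hu : ∀ n, u (n + 1) = u n - η • g (u n) := fun n ↦ Function.iterate_succ_apply' _ n x
  obtain ⟨y, hy, hdist, hdist0⟩ := Metric.exists_tendsto_of_mul_dist_add_le hc
    (φ := fun p ↦ √(h p - hstar)) (fun _ ↦ Real.sqrt_nonneg _)
    (fun n ↦ hu n ▸ mul_dist_add_sqrt_gradient_step_le hμ hη hLη.le hdiff hlip hinf hPL (u n))
  have hgu : Tendsto (fun n ↦ g (u n)) atTop (𝓝 0) := by
    have : ∀ n, g (u n) = η⁻¹ • (u n - u (n + 1)) := fun n ↦ by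
      rw [hu, sub_sub_cancel, smul_smul, inv_mul_cancel₀ hη.ne', one_smul]
    have hsteps : Tendsto (fun n ↦ u n - u (n + 1)) atTop (𝓝 0) :=
      tendsto_zero_iff_norm_tendsto_zero.2 (by simpa only [dist_eq_norm] using hdist0)
    simpa only [this, smul_zero] using hsteps.const_smul η⁻¹
  have hyX : h y = hstar := apply_eq_of_tendsto_of_tendsto_gradient_zero hμ hdiff hinf hPL hy hgu
  have hD : c * Metric.infDist x {y | h y = hstar} ≤ √(h x - hstar) := by
    refine le_trans ?_ hdist
    gcongr
    exact Metric.infDist_le_dist_of_mem (show y ∈ {y | h y = hstar} from hyX)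
  have := pow_le_pow_left₀ (mul_nonneg hc.le Metric.infDist_nonneg) hD 2
  rwa [Real.sq_sqrt (sub_nonneg.2 (hinf x)), mul_pow, mul_pow,
    Real.sq_sqrt (half_pos hμ).le] at this

end GradientDescent

theorem pl_implies_quadratic_growth_general
    {d : ℕ} (h : EuclideanSpace ℝ (Fin d) → ℝ)
    (gradh : EuclideanSpace ℝ (Fin d) → EuclideanSpace ℝ (Fin d))
    (L μ hstar : ℝ) (hμ : 0 < μ)
    (hdiff : ∀ x, HasGradientAt h (gradh x) x)
    (hlip : ∀ x₁ x₂, ‖gradh x₁ - gradh x₂‖ ≤ L * ‖x₁ - x₂‖)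
    (hinf : ∀ x, hstar ≤ h x)
    (hPL : ∀ x, ‖gradh x‖ ^ 2 ≥ 2 * μ * (h x - hstar)) :
    ∀ x, h x - hstar ≥ μ / 2 * (Metric.infDist x {y | h y = hstar}) ^ 2 := by
  intro x
  set A := μ / 2 * Metric.infDist x {y | h y = hstar} ^ 2
  have hlim : Tendsto (fun η ↦ (1 - L * η) ^ 2 * A) (𝓝[>] 0) (𝓝 A) := by
    have : Continuous fun η : ℝ ↦ (1 - L * η) ^ 2 * A := by fun_prop
    simpa using (this.tendsto 0).mono_left nhdsWithin_le_nhds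
  have hsmall : ∀ᶠ η in 𝓝[>] (0 : ℝ), L * η < 1 := by
    have : Tendsto (fun η : ℝ ↦ L * η) (𝓝 0) (𝓝 0) := by
      simpa using (tendsto_id (x := 𝓝 (0 : ℝ))).const_mul L
    exact nhdsWithin_le_nhds (this.eventually (gt_mem_nhds one_pos))
  refine le_of_tendsto hlim ?_
  filter_upwards [self_mem_nhdsWithin, hsmall] with η hη hLη
  simpa only [A, mul_assoc] using
    sq_one_sub_mul_mul_infDist_sq_le hμ hη hLη hdiff hlip hinf hPL x

/-- PL condition implies quadratic growth:
`h(x) − h* ≥ (μ/2)·dist(x, X*)²` where `X* = argmin h`. -/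
theorem pl_implies_quadratic_growth
    {d : ℕ} (h : EuclideanSpace ℝ (Fin d) → ℝ)
    (gradh : EuclideanSpace ℝ (Fin d) → EuclideanSpace ℝ (Fin d))
    (L μ hstar : ℝ) (hμ : 0 < μ)
    (hdiff : ∀ x, HasGradientAt h (gradh x) x)
    (hlip : ∀ x₁ x₂, ‖gradh x₁ - gradh x₂‖ ≤ L * ‖x₁ - x₂‖)
    (hinf : ∀ x, hstar ≤ h x)
    (hatt : ∃ x, h x = hstar)
    (hPL : ∀ x, ‖gradh x‖ ^ 2 ≥ 2 * μ * (h x - hstar)) :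
    ∀ x, h x - hstar ≥ μ / 2 * (Metric.infDist x {y | h y = hstar}) ^ 2 :=
  pl_implies_quadratic_growth_general h gradh L μ hstar hμ hdiff hlip hinf hPL
end
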